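/- Let H₂ = [1 ⋯ 1; x^{i₁} ⋯ x^{i_{n_v}}] with N × N circulant permutation matrices and i₁ = 0. Then girth(H₂) > 8 if and only if all differences iⱼ − i_l (for j ≠ l, j, l ∈ [n_v]) are pairwise distinct modulo N. -/

import Mathlib

open Matrix

/-- The permutation matrix (over ℕ) associated with a permutation. -/
def permMatrix {N : ℕ} (σ : Equiv.Perm (Fin N)) : Matrix (Fin N) (Fin N) ℕ :=
  Matrix.of fun i j => if σ i = j then 1 else 0

/-- The Tanner graph of an ℕ-valued matrix: the bipartite simple graph on rows ⊕ columns
with an edge between row `i` and column `j` whenever `M i j ≠ 0`. -/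
def tanner {α β : Type*} (M : Matrix α β ℕ) : SimpleGraph (α ⊕ β) :=
  SimpleGraph.fromRel fun u v => ∃ i j, u = Sum.inl i ∧ v = Sum.inr j ∧ M i j ≠ 0

open Classical in
/-- The girth of the Tanner (multi)graph of an ℕ-valued matrix: an entry `≥ 2` is a
multiple edge, giving girth `2`; otherwise the girth of the Tanner simple graph
(`⊤` if there is no cycle). -/
noncomputable def matGirth {α β : Type*} (M : Matrix α β ℕ) : ℕ∞ :=
  if ∃ i j, 2 ≤ M i j then 2 else (tanner M).egirth


/-- The `N × N` circulant permutation matrix with shift `r` (mod `N`):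
entry `(i, j)` equals `1` iff `j ≡ i + r (mod N)`. -/
def circ (N : ℕ) (r : ZMod N) : Matrix (Fin N) (Fin N) ℕ :=
  Matrix.of fun i j => if ((j : ℕ) : ZMod N) = ((i : ℕ) : ZMod N) + r then 1 else 0

/-- The block matrix with first block row all identities and second block row the
circulant permutation matrices `circ N (e j)`. -/
def H2circ {N nv : ℕ} (e : Fin nv → ZMod N) :
    Matrix (Fin 2 × Fin N) (Fin nv × Fin N) ℕ :=
  Matrix.of fun p q =>
    if p.1 = 0 then (if p.2 = q.2 then 1 else 0) else circ N (e q.1) p.2 q.2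

/-!
A variable node `(j, t)` of the Tanner graph of `H2circ e` has exactly two neighbours, the checks
`(0, t)` and `(1, t - e j)`. Hence the check rows alternate along a cycle, there are no 6-cycles,
and a 4-cycle exists iff `e j = e l` for some `j ≠ l`. An 8-cycle
`(0, t₁) (j, t₁) (1, s₁) (l, t₂) (0, t₂) (l', t₂) (1, s₂) (j', t₁)` closes up exactly when
`t₁ - t₂ = e j - e l = e j' - e l'`, so short cycles correspond to repeated differences
(a repeated value `e j = e l` being the repeated difference `e j - e l = e l - e j`).
-/

open SimpleGraph Function

section Tanner

variable {α β : Type*} {M : Matrix α β ℕ}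

lemma tanner_adj_inl_inr {p : α} {q : β} :
    (tanner M).Adj (Sum.inl p) (Sum.inr q) ↔ M p q ≠ 0 := by
  simp [tanner]

lemma exists_eq_inr_of_tanner_adj_inl {p : α} {u : α ⊕ β} (h : (tanner M).Adj (Sum.inl p) u) :
    ∃ q, u = Sum.inr q ∧ M p q ≠ 0 := by
  cases u with
  | inl => simp [tanner] at h
  | inr q => exact ⟨q, rfl, tanner_adj_inl_inr.mp h⟩

lemma exists_eq_inl_of_tanner_adj_inr {q : β} {u : α ⊕ β} (h : (tanner M).Adj (Sum.inr q) u) :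
    ∃ p, u = Sum.inl p ∧ M p q ≠ 0 := by
  cases u with
  | inl p => exact ⟨p, rfl, tanner_adj_inl_inr.mp h.symm⟩
  | inr => simp [tanner] at h

lemma exists_isCycle_inl_length_eq [DecidableEq α] [DecidableEq β] {a : α ⊕ β}
    {w : (tanner M).Walk a a} (hw : w.IsCycle) :
    ∃ (p : α) (w' : (tanner M).Walk (Sum.inl p) (Sum.inl p)), w'.IsCycle ∧ w'.length = w.length := by
  cases a with
  | inl p => exact ⟨p, w, hw, rfl⟩
  | inr q =>
    cases w with
    | nil => exact absurd hw Walk.not_isCycle_nil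
    | cons h w' =>
      obtain ⟨p, rfl, -⟩ := exists_eq_inl_of_tanner_adj_inr h
      have hp : Sum.inl p ∈ (Walk.cons h w').support := by simp
      exact ⟨p, _, hw.rotate hp, Walk.length_rotate ..⟩

end Tanner

section DistinctDifferences

variable {ι G : Type*} [AddGroup G]

def DistinctDifferences (e : ι → G) : Prop :=
  ∀ j l j' l', j ≠ l → j' ≠ l' → e j - e l = e j' - e l' → j = j' ∧ l = l'

lemma DistinctDifferences.injective {e : ι → G} (h : DistinctDifferences e) : Injective e := by
  intro j l hjl
  by_contra hne
  exact hne (h j l l j hne (Ne.symm hne) (by rw [hjl])).1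

end DistinctDifferences

lemma Fin.natCast_val_injective (N : ℕ) : Injective (fun x : Fin N => ((x : ℕ) : ZMod N)) :=
  fun x y h => Fin.ext <| by
    simpa [ZMod.val_natCast_of_lt x.isLt, ZMod.val_natCast_of_lt y.isLt] using congrArg ZMod.val h

lemma Fin.natCast_val_surjective (N : ℕ) [NeZero N] :
    Surjective (fun x : Fin N => ((x : ℕ) : ZMod N)) :=
  fun z => ⟨⟨z.val, z.val_lt⟩, ZMod.natCast_zmod_val z⟩

section H2circ

variable {N nv : ℕ} {e : Fin nv → ZMod N}

lemma H2circ_zero_ne_zero_iff {x t : Fin N} {j : Fin nv} :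
    H2circ e (0, x) (j, t) ≠ 0 ↔ x = t := by
  simp [H2circ]

lemma H2circ_one_ne_zero_iff {x t : Fin N} {j : Fin nv} :
    H2circ e (1, x) (j, t) ≠ 0 ↔ ((t : ℕ) : ZMod N) = x + e j := by
  simp [H2circ, circ]

lemma fst_ne_of_H2circ_ne_zero {c c' : Fin 2 × Fin N} {v : Fin nv × Fin N}
    (h : H2circ e c v ≠ 0) (h' : H2circ e c' v ≠ 0) (hne : c ≠ c') : c.1 ≠ c'.1 := by
  obtain ⟨a, x⟩ := c
  obtain ⟨a', x'⟩ := c'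
  obtain ⟨j, t⟩ := v
  rintro (rfl : a = a')
  obtain rfl | rfl : a = 0 ∨ a = 1 := by omega
  · rw [H2circ_zero_ne_zero_iff] at h h'
    exact hne (by rw [h, h'])
  · rw [H2circ_one_ne_zero_iff] at h h'
    exact hne (by rw [Fin.natCast_val_injective N (add_right_cancel (h.symm.trans h'))])

lemma false_of_H2circ_square (he : Injective e) {c₀ c₁ : Fin 2 × Fin N} {v₀ v₁ : Fin nv × Fin N}
    (h₀ : H2circ e c₀ v₀ ≠ 0) (h₁ : H2circ e c₁ v₀ ≠ 0) (h₂ : H2circ e c₁ v₁ ≠ 0)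
    (h₃ : H2circ e c₀ v₁ ≠ 0) (hc : c₀ ≠ c₁) (hv : v₀ ≠ v₁) : False := by
  wlog hc₀ : c₀.1 = 0 generalizing c₀ c₁ v₀ v₁
  · have hrow := fst_ne_of_H2circ_ne_zero h₀ h₁ hc
    exact this h₂ h₃ h₀ h₁ hc.symm hv.symm (by omega)
  obtain ⟨a₀, x₀⟩ := c₀
  obtain ⟨a₁, x₁⟩ := c₁
  obtain ⟨j, t⟩ := v₀
  obtain ⟨l, t'⟩ := v₁
  have ha₁ : a₀ ≠ a₁ := fst_ne_of_H2circ_ne_zero h₀ h₁ hc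
  obtain rfl : a₀ = 0 := hc₀
  obtain rfl : a₁ = 1 := by omega
  rw [H2circ_zero_ne_zero_iff] at h₀ h₃
  rw [H2circ_one_ne_zero_iff] at h₁ h₂
  subst h₀ h₃
  exact hv (by rw [he (add_left_cancel (h₁.symm.trans h₂))])

lemma false_of_H2circ_hexagon {c₀ c₁ c₂ : Fin 2 × Fin N} {v₀ v₁ v₂ : Fin nv × Fin N}
    (h₀ : H2circ e c₀ v₀ ≠ 0) (h₁ : H2circ e c₁ v₀ ≠ 0) (h₂ : H2circ e c₁ v₁ ≠ 0)
    (h₃ : H2circ e c₂ v₁ ≠ 0) (h₄ : H2circ e c₂ v₂ ≠ 0) (h₅ : H2circ e c₀ v₂ ≠ 0)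
    (hc₀₁ : c₀ ≠ c₁) (hc₁₂ : c₁ ≠ c₂) (hc₂₀ : c₂ ≠ c₀) : False := by
  have ha₀₁ := fst_ne_of_H2circ_ne_zero h₀ h₁ hc₀₁
  have ha₁₂ := fst_ne_of_H2circ_ne_zero h₂ h₃ hc₁₂
  have ha₂₀ := fst_ne_of_H2circ_ne_zero h₄ h₅ hc₂₀
  omega

lemma false_of_H2circ_octagon (he : DistinctDifferences e) {c₀ c₁ c₂ c₃ : Fin 2 × Fin N}
    {v₀ v₁ v₂ v₃ : Fin nv × Fin N}
    (h₀ : H2circ e c₀ v₀ ≠ 0) (h₁ : H2circ e c₁ v₀ ≠ 0) (h₂ : H2circ e c₁ v₁ ≠ 0)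
    (h₃ : H2circ e c₂ v₁ ≠ 0) (h₄ : H2circ e c₂ v₂ ≠ 0) (h₅ : H2circ e c₃ v₂ ≠ 0)
    (h₆ : H2circ e c₃ v₃ ≠ 0) (h₇ : H2circ e c₀ v₃ ≠ 0)
    (hc₀₁ : c₀ ≠ c₁) (hc₁₂ : c₁ ≠ c₂) (hc₂₃ : c₂ ≠ c₃) (hc₃₀ : c₃ ≠ c₀) (hc₀₂ : c₀ ≠ c₂)
    (hc₁₃ : c₁ ≠ c₃) (hv₀₁ : v₀ ≠ v₁) (hv₀₃ : v₀ ≠ v₃) : False := by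
  wlog hc₀ : c₀.1 = 0 generalizing c₀ c₁ c₂ c₃ v₀ v₁ v₂ v₃
  · -- read the octagon backwards from `c₁`, whose row is `0`
    have hrow := fst_ne_of_H2circ_ne_zero h₀ h₁ hc₀₁
    exact this h₁ h₀ h₇ h₆ h₅ h₄ h₃ h₂ hc₀₁.symm hc₃₀.symm hc₂₃.symm hc₁₂.symm hc₁₃ hc₀₂
      hv₀₃ hv₀₁ (by omega)
  obtain ⟨a₀, x₀⟩ := c₀
  obtain ⟨a₁, x₁⟩ := c₁
  obtain ⟨a₂, x₂⟩ := c₂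
  obtain ⟨a₃, x₃⟩ := c₃
  obtain ⟨j, t₀⟩ := v₀
  obtain ⟨l, t₁⟩ := v₁
  obtain ⟨l', t₂⟩ := v₂
  obtain ⟨j', t₃⟩ := v₃
  have ha₀₁ : a₀ ≠ a₁ := fst_ne_of_H2circ_ne_zero h₀ h₁ hc₀₁
  have ha₁₂ : a₁ ≠ a₂ := fst_ne_of_H2circ_ne_zero h₂ h₃ hc₁₂
  have ha₂₃ : a₂ ≠ a₃ := fst_ne_of_H2circ_ne_zero h₄ h₅ hc₂₃
  obtain rfl : a₀ = 0 := hc₀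
  obtain rfl : a₁ = 1 := by omega
  obtain rfl : a₂ = 0 := by omega
  obtain rfl : a₃ = 1 := by omega
  rw [H2circ_zero_ne_zero_iff] at h₀ h₃ h₄ h₇
  rw [H2circ_one_ne_zero_iff] at h₁ h₂ h₅ h₆
  subst h₀ h₃ h₄ h₇
  have hjl : j ≠ l := by
    rintro rfl
    exact hc₀₂ (by rw [Fin.natCast_val_injective N (h₁.trans h₂.symm)])
  have hjl' : j' ≠ l' := by
    rintro rfl
    exact hc₀₂ (by rw [Fin.natCast_val_injective N (h₆.trans h₅.symm)])
  have hd : e j - e l = e j' - e l' := by linear_combination h₂ - h₁ + h₆ - h₅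
  exact hv₀₃ (by rw [(he j l j' l' hjl hjl' hd).1])

end H2circ

section Cycles

open Walk

variable {N nv : ℕ} {e : Fin nv → ZMod N}

lemma eight_lt_length_of_isCycle (he : DistinctDifferences e) {c : Fin 2 × Fin N}
    {w : (tanner (H2circ e)).Walk (Sum.inl c) (Sum.inl c)} (hw : w.IsCycle) : 8 < w.length := by
  have hnd := hw.support_nodup
  have h3 := hw.three_le_length
  rcases w with _ | ⟨a₀, w⟩
  · simp at h3
  obtain ⟨v₀, rfl, h₀⟩ := exists_eq_inr_of_tanner_adj_inl a₀
  rcases w with _ | ⟨a₁, w⟩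
  obtain ⟨c₁, rfl, h₁⟩ := exists_eq_inl_of_tanner_adj_inr a₁
  rcases w with _ | ⟨a₂, w⟩
  · simp at h3
  obtain ⟨v₁, rfl, h₂⟩ := exists_eq_inr_of_tanner_adj_inl a₂
  rcases w with _ | ⟨a₃, w⟩
  obtain ⟨c₂, rfl, h₃⟩ := exists_eq_inl_of_tanner_adj_inr a₃
  rcases w with _ | ⟨a₄, w⟩
  · simp only [support_cons, support_nil, List.tail_cons, List.nodup_cons, List.mem_cons,
      List.not_mem_nil, Sum.inl.injEq, Sum.inr.injEq, reduceCtorEq, or_false, false_or,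
      not_false_eq_true, List.nodup_nil, and_true] at hnd
    exact (false_of_H2circ_square he.injective h₀ h₁ h₂ h₃ (Ne.symm hnd.2) hnd.1).elim
  obtain ⟨v₂, rfl, h₄⟩ := exists_eq_inr_of_tanner_adj_inl a₄
  rcases w with _ | ⟨a₅, w⟩
  obtain ⟨c₃, rfl, h₅⟩ := exists_eq_inl_of_tanner_adj_inr a₅
  rcases w with _ | ⟨a₆, w⟩
  · simp only [support_cons, support_nil, List.tail_cons, List.nodup_cons, List.mem_cons,
      List.not_mem_nil, Sum.inl.injEq, Sum.inr.injEq, reduceCtorEq, or_false, false_or, not_or,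
      not_false_eq_true, List.nodup_nil, and_true] at hnd
    obtain ⟨-, ⟨hc₁₂, hc₁₀⟩, -, hc₂₀⟩ := hnd
    exact (false_of_H2circ_hexagon h₀ h₁ h₂ h₃ h₄ h₅ (Ne.symm hc₁₀) hc₁₂ hc₂₀).elim
  obtain ⟨v₃, rfl, h₆⟩ := exists_eq_inr_of_tanner_adj_inl a₆
  rcases w with _ | ⟨a₇, w⟩
  obtain ⟨c₄, rfl, h₇⟩ := exists_eq_inl_of_tanner_adj_inr a₇
  rcases w with _ | ⟨a₈, w⟩
  · simp only [support_cons, support_nil, List.tail_cons, List.nodup_cons, List.mem_cons,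
      List.not_mem_nil, Sum.inl.injEq, Sum.inr.injEq, reduceCtorEq, or_false, false_or, not_or,
      not_false_eq_true, List.nodup_nil, and_true] at hnd
    obtain ⟨⟨hv₀₁, -, hv₀₃⟩, ⟨hc₁₂, hc₁₃, hc₁₀⟩, -, ⟨hc₂₃, hc₂₀⟩, -, hc₃₀⟩ := hnd
    exact (false_of_H2circ_octagon he h₀ h₁ h₂ h₃ h₄ h₅ h₆ h₇ (Ne.symm hc₁₀) hc₁₂ hc₂₃ hc₃₀
      (Ne.symm hc₂₀) hc₁₃ hv₀₁ hv₀₃).elim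
  simp only [length_cons]
  omega

lemma tanner_H2circ_adj_zero (t : Fin N) (j : Fin nv) :
    (tanner (H2circ e)).Adj (Sum.inl (0, t)) (Sum.inr (j, t)) :=
  tanner_adj_inl_inr.2 (H2circ_zero_ne_zero_iff.2 rfl)

lemma tanner_H2circ_adj_one {x t : Fin N} (j : Fin nv) (h : ((t : ℕ) : ZMod N) = x + e j) :
    (tanner (H2circ e)).Adj (Sum.inl (1, x)) (Sum.inr (j, t)) :=
  tanner_adj_inl_inr.2 (H2circ_one_ne_zero_iff.2 h)

lemma egirth_tanner_H2circ_le_four [NeZero N] {j l : Fin nv} (hjl : j ≠ l) (he : e j = e l) :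
    (tanner (H2circ e)).egirth ≤ 4 := by
  obtain ⟨x, hx : ((x : ℕ) : ZMod N) = 0⟩ := Fin.natCast_val_surjective N 0
  obtain ⟨t, ht : ((t : ℕ) : ZMod N) = e j⟩ := Fin.natCast_val_surjective N (e j)
  let w : (tanner (H2circ e)).Walk (Sum.inl (0, t)) (Sum.inl (0, t)) :=
    cons (tanner_H2circ_adj_zero t j) <|
    cons (tanner_H2circ_adj_one j (by rw [hx, ht, zero_add])).symm <|
    cons (tanner_H2circ_adj_one l (by rw [hx, ht, zero_add, he])) <|
    cons (tanner_H2circ_adj_zero t l).symm nil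
  have hw : w.IsCycle := by simp [w, Walk.cons_isCycle_iff, hjl]
  exact egirth_le_length hw

lemma egirth_tanner_H2circ_le_eight [NeZero N] {j l j' l' : Fin nv} (hjj' : e j ≠ e j')
    (hjl : e j ≠ e l) (hd : e j - e l = e j' - e l') : (tanner (H2circ e)).egirth ≤ 8 := by
  obtain ⟨s₁, hs₁ : ((s₁ : ℕ) : ZMod N) = 0⟩ := Fin.natCast_val_surjective N 0
  obtain ⟨s₂, hs₂ : ((s₂ : ℕ) : ZMod N) = e l - e l'⟩ := Fin.natCast_val_surjective N _
  obtain ⟨t₁, ht₁ : ((t₁ : ℕ) : ZMod N) = e j⟩ := Fin.natCast_val_surjective N _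
  obtain ⟨t₂, ht₂ : ((t₂ : ℕ) : ZMod N) = e l⟩ := Fin.natCast_val_surjective N _
  have hll' : e l ≠ e l' := fun h => hjj' (by linear_combination hd + h)
  have hs : s₁ ≠ s₂ := fun h => hll' (sub_eq_zero.1 (by rw [← hs₂, ← h, hs₁]))
  have ht : t₁ ≠ t₂ := fun h => hjl (by rw [← ht₁, ← ht₂, h])
  let w : (tanner (H2circ e)).Walk (Sum.inl (0, t₁)) (Sum.inl (0, t₁)) :=
    cons (tanner_H2circ_adj_zero t₁ j) <|
    cons (tanner_H2circ_adj_one j (by rw [hs₁, ht₁, zero_add])).symm <|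
    cons (tanner_H2circ_adj_one l (by rw [hs₁, ht₂, zero_add])) <|
    cons (tanner_H2circ_adj_zero t₂ l).symm <|
    cons (tanner_H2circ_adj_zero t₂ l') <|
    cons (tanner_H2circ_adj_one l' (by rw [hs₂, ht₂]; ring)).symm <|
    cons (tanner_H2circ_adj_one j' (by rw [hs₂, ht₁]; linear_combination hd)) <|
    cons (tanner_H2circ_adj_zero t₁ j').symm nil
  have hw : w.IsCycle := by
    simp [w, Walk.cons_isCycle_iff, hs, ht, ht.symm, ne_of_apply_ne e hjj', ne_of_apply_ne e hll']
  exact egirth_le_length hw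

lemma egirth_tanner_H2circ_le_eight_of_not_distinctDifferences [NeZero N]
    (he : ¬DistinctDifferences e) : (tanner (H2circ e)).egirth ≤ 8 := by
  by_cases hinj : Injective e
  · simp only [DistinctDifferences, not_forall] at he
    obtain ⟨j, l, j', l', hjl, -, hd, hne⟩ := he
    have hjj' : e j ≠ e j' := by
      intro h
      obtain rfl := hinj h
      exact hne ⟨rfl, hinj (by linear_combination h - hd)⟩
    exact egirth_tanner_H2circ_le_eight hjj' (hinj.ne hjl) hd
  · obtain ⟨j, l, he, hjl⟩ := not_injective_iff.1 hinj
    exact (egirth_tanner_H2circ_le_four hjl he).trans (by norm_num)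

lemma eight_lt_egirth_tanner_H2circ (he : DistinctDifferences e) :
    8 < (tanner (H2circ e)).egirth := by
  refine (by norm_num : (8 : ℕ∞) < 9).trans_le (le_egirth.2 fun _ w hw => ?_)
  obtain ⟨c, w', hw', hlen⟩ := exists_isCycle_inl_length_eq hw
  rw [← hlen]
  exact_mod_cast eight_lt_length_of_isCycle he hw'

end Cycles

theorem stmt10_general {N nv : ℕ} (hN : 0 < N) (e : Fin nv → ZMod N) :
    (8 : ℕ∞) < (tanner (H2circ e)).egirth ↔
      ∀ j l j' l' : Fin nv, j ≠ l → j' ≠ l' →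
        e j - e l = e j' - e l' → j = j' ∧ l = l' := by
  have : NeZero N := ⟨hN.ne'⟩
  exact ⟨fun hg => not_not.1 fun he =>
    (egirth_tanner_H2circ_le_eight_of_not_distinctDifferences he).not_gt hg,
    eight_lt_egirth_tanner_H2circ⟩

theorem stmt10 {N nv : ℕ} (hN : 0 < N) [NeZero nv] (e : Fin nv → ZMod N) (h0 : e 0 = 0) :
    (8 : ℕ∞) < (tanner (H2circ e)).egirth ↔
      ∀ j l j' l' : Fin nv, j ≠ l → j' ≠ l' →
        e j - e l = e j' - e l' → j = j' ∧ l = l' :=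
  stmt10_general hN e
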